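/- Let V be an n-dimensional real vector space equipped with a nondegenerate symmetric bilinear form (·,·) of signature (n−2,2), and let C₁, C₂, C₁′, C₂′ ∈ V. Assume that for every (s,t) ∈ [0,1]², the bilinear form (·,·) is negative definite on the 2-dimensional subspace z(s,t) := span{B₁(s), B₂(t)}. Then every nonzero x ∈ V with Φ₂(x) ≠ 0 satisfies (x,x) > 0. -/

import Mathlib

/-!
Since `Φ₂(x) ≠ 0`, the signs of `(x, C₁)` and `(x, C₁')` differ, so `x` is orthogonal to some
`B₁(s)`; likewise it is orthogonal to some `B₂(t)`. If `(x, x) ≤ 0`, then `x` is orthogonal to the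
negative definite plane `z(s,t)` without lying in it, so the form is negative semidefinite on the
3-dimensional space `z(s,t) + ℝx`. This space meets the positive definite span of the first `n - 2`
vectors of the orthogonal basis trivially, which is impossible in dimension `n`.
-/

open Real Set

theorem Real.mul_nonpos_of_sign_ne {a b : ℝ} (h : Real.sign a ≠ Real.sign b) : a * b ≤ 0 := by
  by_contra! hab
  rcases pos_and_pos_or_neg_and_neg_of_mul_pos hab with ⟨ha, hb⟩ | ⟨ha, hb⟩
  · exact h (by rw [Real.sign_of_pos ha, Real.sign_of_pos hb])
  · exact h (by rw [Real.sign_of_neg ha, Real.sign_of_neg hb])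

theorem exists_mem_Icc_one_sub_mul_add_mul_eq_zero {𝕜 : Type*} [Field 𝕜] [LinearOrder 𝕜]
    [IsStrictOrderedRing 𝕜] {a b : 𝕜} (h : a * b ≤ 0) :
    ∃ s ∈ Icc (0 : 𝕜) 1, (1 - s) * a + s * b = 0 := by
  rcases eq_or_ne a b with rfl | hab
  · exact ⟨0, ⟨le_rfl, zero_le_one⟩, by nlinarith [mul_self_nonneg a]⟩
  have hab' : a - b ≠ 0 := sub_ne_zero.mpr hab
  refine ⟨a / (a - b), ?_, by field_simp; ring⟩
  rcases hab'.lt_or_gt with hneg | hpos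
  · exact ⟨div_nonneg_of_nonpos (by nlinarith) hneg.le,
      (div_le_one_of_neg hneg).mpr (by nlinarith)⟩
  · exact ⟨div_nonneg (by nlinarith) hpos.le, (div_le_one hpos).mpr (by nlinarith)⟩

theorem LinearMap.exists_mem_Icc_apply_eq_zero_of_sign_ne {V : Type*} [AddCommGroup V]
    [Module ℝ V] (f : V →ₗ[ℝ] ℝ) {C C' : V} (h : Real.sign (f C) ≠ Real.sign (f C')) :
    ∃ s ∈ Icc (0 : ℝ) 1, f ((1 - s) • C + s • C') = 0 := by
  simpa only [map_add, map_smul, smul_eq_mul] using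
    exists_mem_Icc_one_sub_mul_add_mul_eq_zero (Real.mul_nonpos_of_sign_ne h)

namespace LinearMap.BilinForm

variable {𝕜 M : Type*} [Field 𝕜] [LinearOrder 𝕜] [AddCommGroup M] [Module 𝕜 M]
  (B : LinearMap.BilinForm 𝕜 M)

theorem finrank_add_finrank_le_of_nonpos_of_pos [FiniteDimensional 𝕜 M] {W P : Submodule 𝕜 M}
    (hW : ∀ w ∈ W, B w w ≤ 0) (hP : ∀ p ∈ P, p ≠ 0 → 0 < B p p) :
    Module.finrank 𝕜 W + Module.finrank 𝕜 P ≤ Module.finrank 𝕜 M := by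
  refine Submodule.finrank_add_finrank_le_of_disjoint
    (Submodule.disjoint_def.mpr fun v hvW hvP => ?_)
  by_contra hv
  exact (hW v hvW).not_gt (hP v hvP hv)

theorem apply_self_pos_of_mem_span_orthogonal [IsStrictOrderedRing 𝕜] {ι : Type*} [Fintype ι]
    {v : ι → M} (horth : ∀ i j, i ≠ j → B (v i) (v j) = 0) (hpos : ∀ i, 0 < B (v i) (v i)) :
    ∀ w ∈ Submodule.span 𝕜 (Set.range v), w ≠ 0 → 0 < B w w := by
  intro w hw hw0
  obtain ⟨c, rfl⟩ := (Submodule.mem_span_range_iff_exists_fun 𝕜).mp hw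
  have hdiag : B (∑ i, c i • v i) (∑ i, c i • v i) = ∑ i, c i * c i * B (v i) (v i) := by
    simp only [map_sum, map_smul, LinearMap.sum_apply, LinearMap.smul_apply, smul_eq_mul]
    refine Finset.sum_congr rfl fun i _ => ?_
    rw [Finset.sum_eq_single i (fun j _ hji => by simp [horth j i hji]) (by simp)]
    ring
  obtain ⟨i, hi⟩ : ∃ i, c i ≠ 0 := by
    by_contra! hc
    exact hw0 (by simp [hc])
  rw [hdiag]
  exact Finset.sum_pos' (fun j _ => mul_nonneg (mul_self_nonneg _) (hpos j).le)
    ⟨i, Finset.mem_univ i, mul_pos (mul_self_pos.mpr hi) (hpos i)⟩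

theorem apply_self_nonpos_of_mem_sup_span_singleton [IsStrictOrderedRing 𝕜] (hB : B.IsSymm)
    {Z : Submodule 𝕜 M} {x : M} (hZ : ∀ z ∈ Z, B z z ≤ 0) (hxZ : ∀ z ∈ Z, B x z = 0)
    (hx : B x x ≤ 0) :
    ∀ w ∈ Z ⊔ Submodule.span 𝕜 {x}, B w w ≤ 0 := by
  intro w hw
  obtain ⟨z, hz, y, hy, rfl⟩ := Submodule.mem_sup.mp hw
  obtain ⟨c, rfl⟩ := Submodule.mem_span_singleton.mp hy
  have hzx : B z x = 0 := by rw [← hB.eq, hxZ z hz]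
  have : B (z + c • x) (z + c • x) = B z z + c * c * B x x := by
    simp only [map_add, map_smul, LinearMap.add_apply, LinearMap.smul_apply, smul_eq_mul,
      hxZ z hz, hzx]
    ring
  rw [this]
  nlinarith [hZ z hz, mul_self_nonneg c]

end LinearMap.BilinForm

theorem inner_self_pos_of_phi_ne_zero
    {V : Type*} [AddCommGroup V] [Module ℝ V]
    (n : ℕ)
    (B : LinearMap.BilinForm ℝ V) (hsymm : B.IsSymm)
    (bsig : Module.Basis (Fin n) ℝ V)
    (horth : ∀ i j, i ≠ j → B (bsig i) (bsig j) = 0)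
    (hsig : ∀ i : Fin n, ((i : ℕ) < n - 2 → 0 < B (bsig i) (bsig i)) ∧
        (n - 2 ≤ (i : ℕ) → B (bsig i) (bsig i) < 0))
    (C₁ C₂ C₁' C₂' : V)
    (hneg : ∀ s ∈ Icc (0:ℝ) 1, ∀ t ∈ Icc (0:ℝ) 1,
      LinearIndependent ℝ ![(1 - s) • C₁ + s • C₁', (1 - t) • C₂ + t • C₂'] ∧
      ∀ w ∈ Submodule.span ℝ {(1 - s) • C₁ + s • C₁', (1 - t) • C₂ + t • C₂'},
        w ≠ 0 → B w w < 0)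
    (x : V) (hx : x ≠ 0)
    (hΦ : (1/4 : ℝ) * (Real.sign (B x C₁) - Real.sign (B x C₁')) *
        (Real.sign (B x C₂) - Real.sign (B x C₂')) ≠ 0) :
    0 < B x x := by
  have := Module.Finite.of_basis bsig
  obtain ⟨hΦ₁, hΦ₂⟩ := mul_ne_zero_iff.mp hΦ
  obtain ⟨s, hs, hxb₁⟩ := (B x).exists_mem_Icc_apply_eq_zero_of_sign_ne
    (sub_ne_zero.mp (right_ne_zero_of_mul hΦ₁))
  obtain ⟨t, ht, hxb₂⟩ := (B x).exists_mem_Icc_apply_eq_zero_of_sign_ne (sub_ne_zero.mp hΦ₂)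
  obtain ⟨hli, hZneg⟩ := hneg s hs t ht
  set Z := Submodule.span ℝ {(1 - s) • C₁ + s • C₁', (1 - t) • C₂ + t • C₂'}
  have hZ : Module.finrank ℝ Z = 2 := by
    have := finrank_span_eq_card hli
    rwa [Matrix.range_cons_cons_empty, Fintype.card_fin] at this
  have hxZ : Z ≤ LinearMap.ker (B x) :=
    Submodule.span_le.mpr (by rintro _ (rfl | rfl) <;> assumption)
  have hxZ' : x ∉ Z := fun h => (hZneg x h hx).ne (hxZ h)
  by_contra! hxx
  have hW : ∀ w ∈ Z ⊔ Submodule.span ℝ {x}, B w w ≤ 0 := by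
    refine B.apply_self_nonpos_of_mem_sup_span_singleton hsymm (fun z hz => ?_) hxZ hxx
    rcases eq_or_ne z 0 with rfl | hz0
    · simp
    · exact (hZneg z hz hz0).le
  let v : Fin (n - 2) → V := bsig ∘ Fin.castLE (n.sub_le 2)
  have hv : LinearIndependent ℝ v := bsig.linearIndependent.comp _ (Fin.castLE_injective _)
  have hP := B.apply_self_pos_of_mem_span_orthogonal (v := v)
    (fun i j hij => horth _ _ ((Fin.castLE_injective _).ne hij)) (fun i => (hsig _).1 i.isLt)
  have hdim := B.finrank_add_finrank_le_of_nonpos_of_pos hW hP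
  rw [Submodule.finrank_sup_span_singleton hxZ', hZ, finrank_span_eq_card hv,
    Module.finrank_eq_card_basis bsig, Fintype.card_fin, Fintype.card_fin] at hdim
  omega
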